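/- There is no probability space carrying random variables A₁, A₂, B₁, B₂, each taking values in {0,1} almost surely, such that E[A₁] = E[A₂] = E[B₁] = E[B₂] = 1/2, E[A₁B₁] = E[A₂B₁] = E[A₁B₂] = 1/4 + √2/8, and E[A₂B₂] = 1/4 − √2/8. -/

import Mathlib

/-! The four expectations and four correlations violate the Clauser–Horne inequality
`E[A₁B₁] + E[A₂B₁] + E[A₁B₂] ≤ E[A₂B₂] + E[A₁] + E[B₁]`, which holds for any random variables
with values in `[0, 1]`: pointwise it is a multilinear inequality, so it suffices to check it at
the vertices of the unit cube, and integration preserves it. The prescribed values give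
`3/4 + 3√2/8` on the left and `5/4 - √2/8` on the right, and `√2 > 1`. -/

open MeasureTheory unitInterval

lemma clauserHorne_le {a₁ a₂ b₁ b₂ : ℝ} (ha₁ : a₁ ∈ I) (ha₂ : a₂ ∈ I) (hb₁ : b₁ ∈ I)
    (hb₂ : b₂ ∈ I) : a₁ * b₁ + a₂ * b₁ + a₁ * b₂ ≤ a₂ * b₂ + a₁ + b₁ := by
  obtain ⟨ha₁0, ha₁1⟩ := ha₁
  obtain ⟨ha₂0, ha₂1⟩ := ha₂
  obtain ⟨hb₁0, hb₁1⟩ := hb₁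
  obtain ⟨hb₂0, hb₂1⟩ := hb₂
  -- The difference is affine in `a₁`; bound it at `a₁ = 0` and at `a₁ = 1`.
  have at_zero : a₂ * b₁ ≤ a₂ * b₂ + b₁ := by nlinarith [mul_nonneg ha₂0 hb₂0]
  have at_one : b₁ + a₂ * b₁ + b₂ ≤ a₂ * b₂ + 1 + b₁ := by
    nlinarith [mul_nonneg (sub_nonneg.2 ha₂1) (sub_nonneg.2 hb₂1)]
  nlinarith [mul_nonneg ha₁0 (sub_nonneg.2 ha₁1)]

section

variable {Ω : Type*} [MeasurableSpace Ω] {μ : Measure Ω} [IsFiniteMeasure μ]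

lemma integrable_of_ae_mem_unitInterval {f : Ω → ℝ} (hf : Measurable f)
    (hI : ∀ᵐ ω ∂μ, f ω ∈ I) : Integrable f μ :=
  .of_bound hf.aestronglyMeasurable 1 <| hI.mono fun _ h ↦ by
    rw [Real.norm_of_nonneg h.1]; exact h.2

lemma integral_clauserHorne_le {a₁ a₂ b₁ b₂ : Ω → ℝ} (ma₁ : Measurable a₁)
    (ma₂ : Measurable a₂) (mb₁ : Measurable b₁) (mb₂ : Measurable b₂)
    (ha₁ : ∀ᵐ ω ∂μ, a₁ ω ∈ I) (ha₂ : ∀ᵐ ω ∂μ, a₂ ω ∈ I) (hb₁ : ∀ᵐ ω ∂μ, b₁ ω ∈ I)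
    (hb₂ : ∀ᵐ ω ∂μ, b₂ ω ∈ I) :
    (∫ ω, a₁ ω * b₁ ω ∂μ) + (∫ ω, a₂ ω * b₁ ω ∂μ) + (∫ ω, a₁ ω * b₂ ω ∂μ) ≤
      (∫ ω, a₂ ω * b₂ ω ∂μ) + (∫ ω, a₁ ω ∂μ) + (∫ ω, b₁ ω ∂μ) := by
  have product {a b : Ω → ℝ} (ma : Measurable a) (mb : Measurable b)
      (ha : ∀ᵐ ω ∂μ, a ω ∈ I) (hb : ∀ᵐ ω ∂μ, b ω ∈ I) : Integrable (fun ω ↦ a ω * b ω) μ :=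
    integrable_of_ae_mem_unitInterval (ma.mul mb) <| by
      filter_upwards [ha, hb] with ω h h' using mul_mem h h'
  have i₁₁ := product ma₁ mb₁ ha₁ hb₁
  have i₂₁ := product ma₂ mb₁ ha₂ hb₁
  have i₁₂ := product ma₁ mb₂ ha₁ hb₂
  have i₂₂ := product ma₂ mb₂ ha₂ hb₂
  have ia₁ := integrable_of_ae_mem_unitInterval ma₁ ha₁
  have ib₁ := integrable_of_ae_mem_unitInterval mb₁ hb₁
  have i₁ : Integrable (fun ω ↦ a₁ ω * b₁ ω + a₂ ω * b₁ ω) μ := i₁₁.add i₂₁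
  have i₂ : Integrable (fun ω ↦ a₂ ω * b₂ ω + a₁ ω) μ := i₂₂.add ia₁
  rw [← integral_add i₁₁ i₂₁, ← integral_add i₁ i₁₂, ← integral_add i₂₂ ia₁,
    ← integral_add i₂ ib₁]
  refine integral_mono_ae (i₁.add i₁₂) (i₂.add ib₁) ?_
  filter_upwards [ha₁, ha₂, hb₁, hb₂] with ω h₁ h₂ h₃ h₄
  exact clauserHorne_le h₁ h₂ h₃ h₄

end

lemma mem_unitInterval_of_eq_zero_or_eq_one {x : ℝ} (h : x = 0 ∨ x = 1) : x ∈ I := by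
  rcases h with rfl | rfl
  exacts [zero_mem, one_mem]

theorem stmt_7 :
    ¬ ∃ (Ω : Type) (_ : MeasurableSpace Ω) (μ : Measure Ω) (A₁ A₂ B₁ B₂ : Ω → ℝ),
      IsProbabilityMeasure μ ∧
      Measurable A₁ ∧ Measurable A₂ ∧ Measurable B₁ ∧ Measurable B₂ ∧
      (∀ᵐ ω ∂μ, A₁ ω = 0 ∨ A₁ ω = 1) ∧ (∀ᵐ ω ∂μ, A₂ ω = 0 ∨ A₂ ω = 1) ∧
      (∀ᵐ ω ∂μ, B₁ ω = 0 ∨ B₁ ω = 1) ∧ (∀ᵐ ω ∂μ, B₂ ω = 0 ∨ B₂ ω = 1) ∧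
      (∫ ω, A₁ ω ∂μ = 1 / 2) ∧ (∫ ω, A₂ ω ∂μ = 1 / 2) ∧
      (∫ ω, B₁ ω ∂μ = 1 / 2) ∧ (∫ ω, B₂ ω ∂μ = 1 / 2) ∧
      (∫ ω, A₁ ω * B₁ ω ∂μ = 1 / 4 + Real.sqrt 2 / 8) ∧
      (∫ ω, A₂ ω * B₁ ω ∂μ = 1 / 4 + Real.sqrt 2 / 8) ∧
      (∫ ω, A₁ ω * B₂ ω ∂μ = 1 / 4 + Real.sqrt 2 / 8) ∧
      (∫ ω, A₂ ω * B₂ ω ∂μ = 1 / 4 - Real.sqrt 2 / 8) := by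
  rintro ⟨Ω, _, μ, A₁, A₂, B₁, B₂, _, mA₁, mA₂, mB₁, mB₂, hA₁, hA₂, hB₁, hB₂,
    eA₁, -, eB₁, -, e₁₁, e₂₁, e₁₂, e₂₂⟩
  have clauserHorne := integral_clauserHorne_le mA₁ mA₂ mB₁ mB₂
    (hA₁.mono fun _ ↦ mem_unitInterval_of_eq_zero_or_eq_one)
    (hA₂.mono fun _ ↦ mem_unitInterval_of_eq_zero_or_eq_one)
    (hB₁.mono fun _ ↦ mem_unitInterval_of_eq_zero_or_eq_one)
    (hB₂.mono fun _ ↦ mem_unitInterval_of_eq_zero_or_eq_one)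
  rw [e₁₁, e₂₁, e₁₂, e₂₂, eA₁, eB₁] at clauserHorne
  have : 1 < Real.sqrt 2 := by
    rw [Real.lt_sqrt zero_le_one]; norm_num
  linarith
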